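/- Let $X$ be a compact subset of a normed real vector space $(E,\|\cdot\|)$ and let $Y \subseteq E$ be a convex set with $X \subseteq \overline{Y}$. Suppose there exist a sequence $(S_n)$ of convex subsets of $Y$ each dense in $Y$, and a sequence $(\gamma_n)$ of upper semicontinuous bounded real-valued functions on $X$ with $\lim_{n\to\infty} \sup_X |\gamma_n| = 0$, such that for each $n$ and each $y \in S_n$, the function $x \mapsto \gamma_n(x) + \|x-y\|$ has a unique global maximum point in $X$. Then $X$ is a singleton (or empty). -/

import Mathlib

/-!
Suppose `a ≠ b` lie in `X` and fix `n` with `|γ n| < ε := ‖a - b‖ / 8` on `X`. Finitely many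
points of `S n` come within `ε` of every point of `X`, and their convex hull `P` is a compact
convex subset of `S n`. The perturbed farthest-distance function
`r y = ⨆ x ∈ X, γ n x + ‖x - y‖` is `1`-Lipschitz, so it attains its minimum on `P` at some `y`;
let `m` be the unique farthest point from `y`. As `r y ≥ ‖a - b‖ / 2 - ε`, the point `m` is
farther than `2ε` from `y`, while some `p ∈ P` lies within `ε` of `m`. Moving `y` slightly
towards `p` decreases `‖x - y‖` uniformly for `x` near `m`, while away from `m` uniqueness and
upper semicontinuity leave a positive gap below `r y`. So `r` decreases along `[y, p] ⊆ P`,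
contradicting minimality.
-/

open Set Filter Topology

section FarthestValue

variable {α : Type*} [PseudoMetricSpace α] {K : Set α} {g : α → ℝ}

noncomputable def farthestValue (K : Set α) (g : α → ℝ) (y : α) : ℝ :=
  ⨆ x : K, g x + dist (x : α) y

theorem bddAbove_range_add_dist (hK : Bornology.IsBounded K) (hg : BddAbove (g '' K)) (y : α) :
    BddAbove (range fun x : K => g x + dist (x : α) y) := by
  obtain ⟨M, hM⟩ := hg
  obtain ⟨C, hC⟩ := (Metric.isBounded_iff_subset_closedBall y).1 hK
  refine ⟨M + C, forall_mem_range.2 fun x => add_le_add (hM (mem_image_of_mem g x.2)) (hC x.2)⟩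

theorem le_farthestValue (hK : Bornology.IsBounded K) (hg : BddAbove (g '' K)) {x : α}
    (hx : x ∈ K) (y : α) : g x + dist x y ≤ farthestValue K g y :=
  le_ciSup (f := fun x : K => g x + dist (x : α) y) (bddAbove_range_add_dist hK hg y) ⟨x, hx⟩

theorem farthestValue_le (hK : K.Nonempty) {y : α} {c : ℝ} (h : ∀ x ∈ K, g x + dist x y ≤ c) :
    farthestValue K g y ≤ c :=
  have := hK.to_subtype
  ciSup_le fun x => h x x.2

theorem farthestValue_eq_of_isMaxOn (hK : Bornology.IsBounded K) (hg : BddAbove (g '' K))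
    {y m : α} (hm : m ∈ K) (hmax : IsMaxOn (fun x => g x + dist x y) K m) :
    farthestValue K g y = g m + dist m y :=
  (farthestValue_le ⟨m, hm⟩ fun _ hx => hmax hx).antisymm (le_farthestValue hK hg hm y)

theorem lipschitzWith_farthestValue (hne : K.Nonempty) (hK : Bornology.IsBounded K)
    (hg : BddAbove (g '' K)) : LipschitzWith 1 (farthestValue K g) :=
  LipschitzWith.of_le_add fun y z => farthestValue_le hne fun x hx => by
    linarith [le_farthestValue hK hg hx z, dist_triangle x z y, dist_comm y z]

end FarthestValue

theorem IsCompact.exists_lt_forall_le_of_forall_lt {α β : Type*} [TopologicalSpace α]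
    [LinearOrder β] [NoMinOrder β] {W : Set α} {f : α → β} (hW : IsCompact W)
    (hf : UpperSemicontinuousOn f W) {c : β} (h : ∀ x ∈ W, f x < c) :
    ∃ c' < c, ∀ x ∈ W, f x ≤ c' := by
  rcases W.eq_empty_or_nonempty with rfl | hne
  · obtain ⟨c', hc'⟩ := exists_lt c
    exact ⟨c', hc', by simp⟩
  · obtain ⟨x₀, hx₀, hmax⟩ := hf.exists_isMaxOn hne hW
    exact ⟨f x₀, h x₀ hx₀, fun x hx => hmax hx⟩

theorem IsCompact.exists_finite_cover_balls_of_subset_closure {α : Type*} [PseudoMetricSpace α]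
    {X S : Set α} (hX : IsCompact X) (hXS : X ⊆ closure S) {ε : ℝ} (hε : 0 < ε) :
    ∃ F ⊆ S, F.Finite ∧ X ⊆ ⋃ p ∈ F, Metric.ball p ε :=
  hX.elim_finite_subcover_image (fun _ _ => Metric.isOpen_ball) fun x hx => by
    obtain ⟨p, hp, hxp⟩ := Metric.mem_closure_iff.1 (hXS hx) ε hε
    exact mem_biUnion hp hxp

theorem exists_mem_segment_farthestValue_lt {E : Type*} [NormedAddCommGroup E]
    [NormedSpace ℝ E] {K : Set E} {g : E → ℝ} (hK : IsCompact K)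
    (hg : UpperSemicontinuousOn g K) {y m p : E} (hm : m ∈ K)
    (hmax : IsMaxOn (fun x => g x + dist x y) K m)
    (huniq : ∀ x ∈ K, IsMaxOn (fun x => g x + dist x y) K x → x = m)
    (hp : dist p m < dist m y) :
    ∃ z ∈ segment ℝ y p, farthestValue K g z < farthestValue K g y := by
  rw [farthestValue_eq_of_isMaxOn hK.isBounded (hg.bddAbove_of_isCompact hK) hm hmax]
  set ρ := (dist m y - dist p m) / 3 with hρ
  have hρ0 : 0 < ρ := div_pos (sub_pos.2 hp) three_pos
  -- Away from `m` the maximum is not attained; compactness makes the deficit uniform.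
  obtain ⟨c, hc, hfar⟩ : ∃ c < g m + dist m y, ∀ x ∈ K, ρ ≤ dist x m → g x + dist x y ≤ c := by
    have hW : IsCompact {x ∈ K | ρ ≤ dist x m} :=
      hK.inter_right (isClosed_le continuous_const (continuous_id.dist continuous_const))
    have hf : UpperSemicontinuousOn (fun x => g x + dist x y) {x ∈ K | ρ ≤ dist x m} :=
      (hg.add (continuous_id.dist continuous_const).continuousOn.upperSemicontinuousOn).mono
        inter_subset_left
    obtain ⟨c, hc, h⟩ := hW.exists_lt_forall_le_of_forall_lt hf fun x ⟨hx, hxm⟩ =>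
      (hmax hx).lt_of_ne fun heq => by
        have : x = m := huniq x hx fun z hz => (hmax hz).trans heq.ge
        rw [this, dist_self] at hxm
        linarith
    exact ⟨c, hc, fun x hx hxm => h x ⟨hx, hxm⟩⟩
  obtain ⟨t, ht, hdt⟩ := exists_pos_mul_lt (sub_pos.2 hc) (dist p y)
  set τ := min t 1
  have hτ0 : 0 < τ := lt_min ht one_pos
  have hτ1 : τ ≤ 1 := min_le_right _ _
  have hτt : dist p y * τ ≤ dist p y * t := mul_le_mul_of_nonneg_left (min_le_left _ _) dist_nonneg
  set z := (1 - τ) • y + τ • p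
  have hz : ∀ w, dist z w ≤ (1 - τ) * dist y w + τ * dist p w := fun w =>
    (convexOn_univ_dist w).2 trivial trivial (by linarith) hτ0.le (by ring)
  refine ⟨z, ⟨1 - τ, τ, by linarith, hτ0.le, by ring, rfl⟩,
    (farthestValue_le ⟨m, hm⟩ (c := max (g m + dist m y - τ * ρ) (c + τ * dist p y))
      fun x hx => ?_).trans_lt (max_lt (by nlinarith) (by linarith))⟩
  rcases lt_or_ge (dist x m) ρ with hxm | hxm
  · have hgap : ρ ≤ dist y x - dist p x := by
      linarith [dist_triangle m x y, dist_triangle p m x, dist_comm x m, dist_comm x y]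
    have := mul_le_mul_of_nonneg_left hgap hτ0.le
    have hxmax : g x + dist x y ≤ g m + dist m y := hmax hx
    refine le_max_of_le_left ?_
    linarith [hz x, dist_comm x z, dist_comm x y]
  · have hzy := hz y
    rw [dist_self, mul_zero, zero_add] at hzy
    refine le_max_of_le_right ?_
    linarith [dist_triangle x y z, hfar x hx hxm, dist_comm y z]

theorem stmt_9_general {E : Type*} [NormedAddCommGroup E] [NormedSpace ℝ E]
    (X : Set E) (hXc : IsCompact X)
    (Y : Set E) (hXY : X ⊆ closure Y)
    (S : ℕ → Set E) (hSconv : ∀ n, Convex ℝ (S n))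
    (hSdense : ∀ n, Y ⊆ closure (S n))
    (γ : ℕ → E → ℝ) (hγusc : ∀ n, UpperSemicontinuousOn (γ n) X)
    (hγb : ∀ n, ∃ M, ∀ x ∈ X, |γ n x| ≤ M)
    (hγ0 : Filter.Tendsto (fun n => ⨆ x : X, |γ n x|) Filter.atTop (nhds 0))
    (huniq : ∀ n, ∀ y ∈ S n,
      ∃! a, a ∈ X ∧ IsMaxOn (fun x => γ n x + ‖x - y‖) X a) :
    X.Subsingleton := by
  intro a ha b hb
  by_contra hab
  set ε := dist a b / 8 with hε_def
  have hε : 0 < ε := div_pos (dist_pos.2 hab) (by norm_num)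
  obtain ⟨n, hn⟩ := (hγ0.eventually (eventually_lt_nhds hε)).exists
  have hγε : ∀ x ∈ X, |γ n x| < ε := by
    obtain ⟨M, hM⟩ := hγb n
    exact fun x hx => (le_ciSup (f := fun x : X => |γ n x|)
      ⟨M, forall_mem_range.2 fun x => hM x x.2⟩ ⟨x, hx⟩).trans_lt hn
  obtain ⟨F, hFS, hFfin, hXF⟩ := hXc.exists_finite_cover_balls_of_subset_closure
    (hXY.trans (closure_minimal (hSdense n) isClosed_closure)) hε
  have hgb := (hγusc n).bddAbove_of_isCompact hXc
  obtain ⟨pa, hpaF, -⟩ := mem_iUnion₂.1 (hXF ha)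
  obtain ⟨y, hyP, hymin⟩ := (hFfin.isCompact_convexHull (𝕜 := ℝ)).exists_isMinOn
    ⟨pa, subset_convexHull ℝ F hpaF⟩
    (lipschitzWith_farthestValue ⟨a, ha⟩ hXc.isBounded hgb).continuous.continuousOn
  simp_rw [← dist_eq_norm] at huniq
  obtain ⟨m, ⟨hmX, hmmax⟩, hmuniq⟩ := huniq n y (convexHull_min hFS (hSconv n) hyP)
  have hmy : 2 * ε < dist m y := by
    linarith [le_farthestValue hXc.isBounded hgb ha y, le_farthestValue hXc.isBounded hgb hb y,
      farthestValue_eq_of_isMaxOn hXc.isBounded hgb hmX hmmax, dist_triangle_right a b y,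
      abs_lt.1 (hγε a ha), abs_lt.1 (hγε b hb), abs_lt.1 (hγε m hmX)]
  obtain ⟨p, hpF, hmp⟩ := mem_iUnion₂.1 (hXF hmX)
  obtain ⟨z, hz, hlt⟩ := exists_mem_segment_farthestValue_lt hXc (hγusc n) hmX hmmax
    (fun x hx h => hmuniq x ⟨hx, h⟩) (by linarith [dist_comm p m, Metric.mem_ball.1 hmp])
  have hzP := (convex_convexHull ℝ F).segment_subset hyP (subset_convexHull ℝ F hpF) hz
  exact (hymin hzP).not_gt hlt

theorem stmt_9 {E : Type*} [NormedAddCommGroup E] [NormedSpace ℝ E]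
    (X : Set E) (hXc : IsCompact X)
    (Y : Set E) (hYconv : Convex ℝ Y) (hXY : X ⊆ closure Y)
    (S : ℕ → Set E) (hSY : ∀ n, S n ⊆ Y) (hSconv : ∀ n, Convex ℝ (S n))
    (hSdense : ∀ n, Y ⊆ closure (S n))
    (γ : ℕ → E → ℝ) (hγusc : ∀ n, UpperSemicontinuousOn (γ n) X)
    (hγb : ∀ n, ∃ M, ∀ x ∈ X, |γ n x| ≤ M)
    (hγ0 : Filter.Tendsto (fun n => ⨆ x : X, |γ n x|) Filter.atTop (nhds 0))
    (huniq : ∀ n, ∀ y ∈ S n,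
      ∃! a, a ∈ X ∧ IsMaxOn (fun x => γ n x + ‖x - y‖) X a) :
    X.Subsingleton :=
  stmt_9_general X hXc Y hXY S hSconv hSdense γ hγusc hγb hγ0 huniq
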